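/- arXiv:0804.3302 — 4 statements merged into one kernel-verified Lean document; each statement's English description precedes it below -/
import Mathlib

section
/- Let f be an entire function on ℂ^p with |f(z)| ≤ C₀ e^{σ|z|}, whose restriction to ℝ^p has finite Besicovitch norm ‖f‖_B. Then for every s₀ > 0 there exists T(s₀) such that for all T ≥ T(s₀) and all s ∈ (0, s₀), ∫_{[-T,T]^p} |f(x₁ + is, x₂, …, x_p)| e^{-sσ} dx ≤ C₈ T^p, where C₈ = 2^{p+1}(1 + 2·3^p ‖f‖_B). -/
open MeasureTheory Filter

noncomputable section

def cube (p : ℕ) (T : ℝ) : Set (EuclideanSpace ℝ (Fin p)) :=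
  {x | ∀ i, x i ∈ Set.Icc (-T) T}

def BNorm (p : ℕ) (f : EuclideanSpace ℝ (Fin p) → ℂ) : ℝ :=
  Filter.limsup (fun T : ℝ => (2*T)^(-(p:ℤ)) * ∫ x in cube p T, ‖f x‖) Filter.atTop

def BNormFinite (p : ℕ) (f : EuclideanSpace ℝ (Fin p) → ℂ) : Prop :=
  Filter.IsBoundedUnder (· ≤ ·) Filter.atTop
    (fun T : ℝ => (2*T)^(-(p:ℤ)) * ∫ x in cube p T, ‖f x‖)

def toC (p : ℕ) (x : EuclideanSpace ℝ (Fin p)) : EuclideanSpace ℂ (Fin p) :=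
  WithLp.toLp 2 (fun i => (x i : ℂ))

/-- The point (x₁ + is, x₂, …, x_p) ∈ ℂ^p obtained from real x by shifting the first
coordinate by is. -/
def shiftFirst (p : ℕ) (hp : 0 < p) (s : ℝ) (x : EuclideanSpace ℝ (Fin p)) :
    EuclideanSpace ℂ (Fin p) :=
  WithLp.toLp 2 (fun i => if i = (⟨0, hp⟩ : Fin p) then (x i : ℂ) + Complex.I * s else (x i : ℂ))

/-! Fix `T` and `s`, put `g x = f (x + i s e₁)` and choose a measurable `u` with `|u| ≤ 1` and
`u g = |g|`. Then `F z = ∫_{[-T,T]^p} u x f (x + z e₁) dx` is entire of exponential type `σ` and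
`F (i s) = ∫ |g|`. On the real axis a translation of the cube gives
`|F t| ≤ ∫_{[-T-|t|,T+|t|]^p} |f| ≤ (‖f‖_B + 3^{-p}) (2 (T + |t|))^p` once `T` is large. The
Phragmén–Lindelöf principle in the upper half-plane, applied to `F z e^{iσz} (z + iT)^{-p}`,
carries this bound from the real axis to `i s`. -/

open Complex Metric in
theorem differentiable_setIntegral_mul {X : Type*} [TopologicalSpace X] [MeasurableSpace X]
    [OpensMeasurableSpace X] [T2Space X] {μ : Measure X} {K : Set X} (hK : IsCompact K) {u : X → ℂ}
    (hu : IntegrableOn u K μ) {G : X → ℂ → ℂ} (hG : Continuous (Function.uncurry G))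
    (hGd : ∀ x, Differentiable ℂ (G x)) :
    Differentiable ℂ fun z => ∫ x in K, u x * G x z ∂μ := by
  intro z₀
  obtain ⟨M, hM⟩ := (hK.prod (isCompact_closedBall z₀ 2)).exists_bound_of_continuousOn
    hG.continuousOn
  have hderiv_le : ∀ x ∈ K, ∀ z ∈ ball z₀ 1, ‖deriv (G x) z‖ ≤ M := by
    intro x hx z hz
    simpa using norm_deriv_le_of_forall_mem_sphere_norm_le one_pos
      (hGd x).diffContOnCl fun w hw => hM (x, w) ⟨hx, by
        rw [mem_closedBall]; rw [mem_sphere] at hw; rw [mem_ball] at hz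
        linarith [dist_triangle w z z₀]⟩
  have hmeas : ∀ z, AEStronglyMeasurable (fun x => u x * G x z) (μ.restrict K) := fun z =>
    hu.aestronglyMeasurable.mul (hG.comp (Continuous.prodMk_left z)).aestronglyMeasurable
  have hderiv_meas : AEStronglyMeasurable (fun x => u x * deriv (G x) z₀) (μ.restrict K) :=
    hu.aestronglyMeasurable.mul ((stronglyMeasurable_deriv_with_param hG).comp_measurable
      measurable_prodMk_right).aestronglyMeasurable
  refine (hasDerivAt_integral_of_dominated_loc_of_deriv_le (ball_mem_nhds z₀ one_pos)
    (F' := fun z x => u x * deriv (G x) z) (bound := fun x => ‖u x‖ * M) (.of_forall hmeas) ?_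
    hderiv_meas ?_ (hu.norm.mul_const M) ?_).2.differentiableAt
  · exact hu.mul_continuousOn (hG.comp (Continuous.prodMk_left z₀)).continuousOn hK
  · rw [ae_restrict_iff' hK.measurableSet]
    exact .of_forall fun x hx z hz => by
      rw [norm_mul]; exact mul_le_mul_of_nonneg_left (hderiv_le x hx z hz) (norm_nonneg _)
  · exact .of_forall fun x z _ => ((hGd x) z).hasDerivAt.const_mul (u x)

theorem norm_apply_add_le_of_exp_bound {V : Type*} [SeminormedAddCommGroup V] {f : V → ℂ}
    {C₀ σ : ℝ} (hbound : ∀ w, ‖f w‖ ≤ C₀ * Real.exp (σ * ‖w‖)) (a b : V) :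
    ‖f (a + b)‖ ≤ C₀ * Real.exp (|σ| * ‖a‖) * Real.exp (σ * ‖b‖) := by
  have hC₀ : 0 ≤ C₀ := by simpa using (norm_nonneg _).trans (hbound 0)
  have hexp : σ * ‖a + b‖ ≤ |σ| * ‖a‖ + σ * ‖b‖ := by
    have h := abs_norm_sub_norm_le (a + b) b
    rw [add_sub_cancel_right] at h
    nlinarith [neg_abs_le σ, le_abs_self σ, abs_le.1 h, abs_nonneg σ]
  calc ‖f (a + b)‖ ≤ C₀ * Real.exp (σ * ‖a + b‖) := hbound _
    _ ≤ C₀ * Real.exp (|σ| * ‖a‖ + σ * ‖b‖) := by gcongr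
    _ = _ := by rw [Real.exp_add, mul_assoc]

theorem norm_setIntegral_mul_comp_add_smul_le {X V : Type*} [MeasurableSpace X] {μ : Measure X}
    {K : Set X} (hK : μ K < ⊤) [NormedAddCommGroup V] [NormedSpace ℂ V] {f : V → ℂ}
    {C₀ σ : ℝ} (hbound : ∀ w, ‖f w‖ ≤ C₀ * Real.exp (σ * ‖w‖)) {a : X → V} {R : ℝ}
    (ha : ∀ x ∈ K, ‖a x‖ ≤ R) {v : V} (hv : ‖v‖ = 1) {u : X → ℂ} (hu : ∀ x, ‖u x‖ ≤ 1)
    (z : ℂ) :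
    ‖∫ x in K, u x * f (a x + z • v) ∂μ‖ ≤
      C₀ * Real.exp (|σ| * R) * μ.real K * Real.exp (σ * ‖z‖) := by
  have hC₀ : 0 ≤ C₀ := by simpa using (norm_nonneg _).trans (hbound 0)
  refine (norm_setIntegral_le_of_norm_le_const (C := C₀ * Real.exp (|σ| * R) * Real.exp (σ * ‖z‖))
    hK fun x hx => ?_).trans_eq (by ring)
  calc ‖u x * f (a x + z • v)‖ ≤ 1 * (C₀ * Real.exp (|σ| * ‖a x‖) * Real.exp (σ * ‖z • v‖)) := by
        rw [norm_mul]
        exact mul_le_mul (hu x) (norm_apply_add_le_of_exp_bound hbound _ _) (norm_nonneg _)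
          zero_le_one
    _ ≤ C₀ * Real.exp (|σ| * R) * Real.exp (σ * ‖z‖) := by
        rw [one_mul, norm_smul, hv, mul_one]
        gcongr
        exact ha x hx

theorem exists_measurable_mul_eq_norm {X : Type*} [MeasurableSpace X] {g : X → ℂ}
    (hg : Measurable g) :
    ∃ u : X → ℂ, Measurable u ∧ (∀ x, ‖u x‖ ≤ 1) ∧ ∀ x, u x * g x = ‖g x‖ := by
  refine ⟨fun x => ‖g x‖ * (g x)⁻¹, by fun_prop, fun x => ?_, fun x => ?_⟩ <;>
    rcases eq_or_ne (g x) 0 with hx | hx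
  · simp [hx]
  · rw [norm_mul, norm_inv, Complex.norm_real, norm_norm, mul_inv_cancel₀ (norm_ne_zero_iff.2 hx)]
  · simp [hx]
  · rw [mul_assoc, inv_mul_cancel₀ hx, mul_one]

open Complex in
theorem PhragmenLindelof.upper_half_plane_of_bounded_on_imag {φ : ℂ → ℂ} {C K c M : ℝ}
    (hd : DifferentiableOn ℂ φ {z | 0 ≤ z.im})
    (hgrow : ∀ z, 0 ≤ z.im → ‖φ z‖ ≤ K * Real.exp (c * ‖z‖))
    (hreal : ∀ t : ℝ, ‖φ t‖ ≤ C) (him : ∀ y : ℝ, 0 ≤ y → ‖φ (y * I)‖ ≤ M)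
    {z : ℂ} (hz : 0 ≤ z.im) : ‖φ z‖ ≤ C := by
  have hrot : ∀ w : ℂ, (I * w).im = w.re := by simp
  have key := PhragmenLindelof.right_half_plane_of_bounded_on_real (f := fun w => φ (I * w))
    (C := C) (z := -I * z) ?_ ⟨1, one_lt_two, c, ?_⟩ ?_ ?_ (by simpa using hz)
  · simpa [← mul_assoc] using key
  · refine (hd.comp (differentiable_id.const_mul I).differentiableOn fun w hw => ?_).diffContOnCl
    have hcl : closure {w : ℂ | 0 < w.re} ⊆ {w | 0 ≤ w.re} :=
      closure_minimal (fun w (hw : 0 < w.re) => hw.le) (isClosed_le continuous_const continuous_re)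
    simpa using hcl hw
  · refine Asymptotics.IsBigO.of_bound K (Filter.eventually_inf_principal.2 (.of_forall ?_))
    intro w (hw : 0 < w.re)
    simpa [Real.rpow_one] using hgrow (I * w) (by rw [hrot]; exact hw.le)
  · exact ⟨M, Filter.eventually_map.2 <| Filter.eventually_atTop.2
      ⟨0, fun y hy => by simpa [mul_comm] using him y hy⟩⟩
  · intro x
    have h : I * (x * I) = ((-x : ℝ) : ℂ) := by push_cast; rw [mul_left_comm, I_mul_I, mul_neg_one]
    exact h ▸ hreal (-x)

open Complex in
theorem norm_apply_I_mul_le_of_norm_real_le {F : ℂ → ℂ} (hF : Differentiable ℂ F)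
    {K σ A T : ℝ} {p : ℕ} (hT : 0 < T) (hgrow : ∀ z, ‖F z‖ ≤ K * Real.exp (σ * ‖z‖))
    (hreal : ∀ t : ℝ, ‖F t‖ ≤ A * (T + |t|) ^ p) {s : ℝ} (hs : 0 ≤ s) :
    ‖F (I * s)‖ ≤ 2 ^ p * A * (T + s) ^ p * Real.exp (σ * s) := by
  have hK : 0 ≤ K := by simpa using (norm_nonneg _).trans (hgrow 0)
  have hA : 0 ≤ A := by
    have h := (norm_nonneg _).trans (hreal 0)
    rw [abs_zero, add_zero] at h
    exact nonneg_of_mul_nonneg_left h (by positivity)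
  have hT_le : ∀ z : ℂ, 0 ≤ z.im → T ≤ ‖z + T * I‖ := fun z hz =>
    calc T ≤ (z + T * I).im := by
          simp only [add_im, mul_im, ofReal_re, I_im, ofReal_im, I_re]; linarith
      _ ≤ ‖z + T * I‖ := im_le_norm _
  have hre_le : ∀ z : ℂ, |z.re| ≤ ‖z + T * I‖ := fun z => by
    simpa using abs_re_le_norm (z + T * I)
  have hne : ∀ z : ℂ, 0 ≤ z.im → z + T * I ≠ 0 := fun z hz h =>
    by simpa [h] using hT.trans_le (hT_le z hz)
  -- `e^{iσz}` cancels the growth of `F` along `iℝ₊`, `(z + iT)^{-p}` its growth along `ℝ`.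
  set φ : ℂ → ℂ := fun z => F z * exp (σ * I * z) / (z + T * I) ^ p with hφ
  have hφ_norm : ∀ z, ‖φ z‖ = ‖F z‖ * Real.exp (-(σ * z.im)) / ‖z + T * I‖ ^ p := fun z => by
    simp [hφ, norm_exp]
  have hφ_le : ∀ z, 0 ≤ z.im → ‖φ z‖ ≤ ‖F z‖ * Real.exp (-(σ * z.im)) / T ^ p := fun z hz => by
    rw [hφ_norm]; gcongr; exact hT_le z hz
  have hd : DifferentiableOn ℂ φ {z | 0 ≤ z.im} := fun z hz =>
    ((hF z).mul (by fun_prop)).div ((differentiableAt_id.add_const _).pow p)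
      (pow_ne_zero _ (hne z hz)) |>.differentiableWithinAt
  have hgrowφ : ∀ z, 0 ≤ z.im → ‖φ z‖ ≤ K / T ^ p * Real.exp (2 * |σ| * ‖z‖) := fun z hz => by
    refine (hφ_le z hz).trans ?_
    rw [div_mul_eq_mul_div]
    gcongr ?_ / _
    calc ‖F z‖ * Real.exp (-(σ * z.im)) ≤ K * Real.exp (σ * ‖z‖) * Real.exp (-(σ * z.im)) := by
          gcongr; exact hgrow z
      _ ≤ K * Real.exp (2 * |σ| * ‖z‖) := by
          rw [mul_assoc, ← Real.exp_add]
          gcongr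
          have h1 : σ * ‖z‖ ≤ |σ| * ‖z‖ := by gcongr; exact le_abs_self σ
          have h2 : -(σ * z.im) ≤ |σ| * ‖z‖ := (neg_le_abs _).trans <| by
            rw [abs_mul]; exact mul_le_mul_of_nonneg_left (abs_im_le_norm z) (abs_nonneg σ)
          linarith
  have hrealφ : ∀ t : ℝ, ‖φ t‖ ≤ 2 ^ p * A := fun t => by
    have hpos : 0 < ‖(t : ℂ) + T * I‖ ^ p := pow_pos (hT.trans_le (hT_le t (by simp))) p
    rw [hφ_norm, div_le_iff₀ hpos, ofReal_im, mul_zero, neg_zero, Real.exp_zero, mul_one]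
    calc ‖F t‖ ≤ A * (T + |t|) ^ p := hreal t
      _ ≤ A * (2 * ‖(t : ℂ) + T * I‖) ^ p := by
          gcongr
          linarith [hT_le t (by simp), hre_le t, show |(t : ℂ).re| = |t| by simp]
      _ = 2 ^ p * A * ‖(t : ℂ) + T * I‖ ^ p := by ring
  have himφ : ∀ y : ℝ, 0 ≤ y → ‖φ (y * I)‖ ≤ K / T ^ p := fun y hy => by
    have him : ((y : ℂ) * I).im = y := by simp
    refine (hφ_le _ (by rw [him]; exact hy)).trans ?_
    rw [him]
    gcongr
    calc ‖F (y * I)‖ * Real.exp (-(σ * y))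
        ≤ K * Real.exp (σ * y) * Real.exp (-(σ * y)) := by
          gcongr
          simpa [abs_of_nonneg hy] using hgrow (y * I)
      _ = K := by rw [mul_assoc, ← Real.exp_add, add_neg_cancel, Real.exp_zero, mul_one]
  have hIs : ‖I * s + T * I‖ = T + s := by
    rw [show I * s + T * I = ((T + s : ℝ) : ℂ) * I by push_cast; ring, norm_mul, norm_I, mul_one,
      norm_real, Real.norm_of_nonneg (by linarith)]
  have key := PhragmenLindelof.upper_half_plane_of_bounded_on_imag hd hgrowφ hrealφ himφ
    (z := I * s) (by simpa using hs)
  rw [hφ_norm, hIs, div_le_iff₀ (by positivity)] at key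
  simp only [mul_im, I_re, ofReal_re, I_im, ofReal_im, mul_zero, one_mul, zero_add,
    Real.exp_neg] at key
  rwa [← div_eq_mul_inv, div_le_iff₀ (Real.exp_pos _)] at key

theorem setIntegral_comp_add_right_le {G : Type*} [AddGroup G] [MeasurableSpace G]
    [MeasurableAdd G] {μ : Measure G} [μ.IsAddRightInvariant] {g : G → ℝ} {s t : Set G} {v : G}
    (hg : IntegrableOn g t μ) (hg0 : 0 ≤ g) (hst : ∀ x ∈ s, x + v ∈ t) :
    ∫ x in s, g (x + v) ∂μ ≤ ∫ x in t, g x ∂μ := by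
  have hmp := measurePreserving_add_right μ v
  have hemb := measurableEmbedding_addRight v
  rw [← hmp.setIntegral_preimage_emb hemb g t]
  refine setIntegral_mono_set ((hmp.integrableOn_comp_preimage hemb).2 hg) ?_
    (.of_forall hst)
  exact .of_forall fun x => hg0 (x + v)

section Cube

variable {p : ℕ}

theorem isCompact_cube (T : ℝ) : IsCompact (cube p T) := by
  have : cube p T = PiLp.homeomorph 2 _ ⁻¹' Set.univ.pi fun _ => Set.Icc (-T) T := by
    ext x; simp [cube, PiLp.homeomorph, Pi.le_def, forall_and]
  rw [this, Homeomorph.isCompact_preimage]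
  exact isCompact_univ_pi fun _ => isCompact_Icc

theorem add_mem_cube {T r : ℝ} {x v : EuclideanSpace ℝ (Fin p)} (hx : x ∈ cube p T)
    (hv : ∀ i, |v i| ≤ r) : x + v ∈ cube p (T + r) := fun i => by
  have := abs_le.1 (hv i)
  simp only [PiLp.add_apply, Set.mem_Icc]
  constructor <;> linarith [(hx i).1, (hx i).2]

theorem continuous_toC : Continuous (toC p) := by
  unfold toC; fun_prop

theorem toC_add_smul_single (x : EuclideanSpace ℝ (Fin p)) (t : ℝ) (i : Fin p) :
    toC p (x + t • EuclideanSpace.single i 1) = toC p x + (t : ℂ) • EuclideanSpace.single i 1 := by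
  ext j; by_cases hj : j = i <;> simp [toC, hj]

theorem shiftFirst_eq (hp : 0 < p) (s : ℝ) (x : EuclideanSpace ℝ (Fin p)) :
    shiftFirst p hp s x = toC p x + (Complex.I * s) • EuclideanSpace.single ⟨0, hp⟩ 1 := by
  ext j; by_cases hj : j = ⟨0, hp⟩ <;> simp [shiftFirst, toC, hj]

theorem BNorm_nonneg {h : EuclideanSpace ℝ (Fin p) → ℂ} (hB : BNormFinite p h) :
    0 ≤ BNorm p h :=
  le_limsup_of_frequently_le ((eventually_ge_atTop 0).mono fun T hT =>
    mul_nonneg (zpow_nonneg (by linarith) _) (integral_nonneg fun _ => norm_nonneg _)).frequently hB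

theorem eventually_integral_cube_le {h : EuclideanSpace ℝ (Fin p) → ℂ} (hB : BNormFinite p h)
    {η : ℝ} (hη : 0 < η) :
    ∀ᶠ T in atTop, ∫ x in cube p T, ‖h x‖ ≤ (BNorm p h + η) * (2 * T) ^ p := by
  filter_upwards [eventually_lt_of_limsup_lt (lt_add_of_pos_right _ hη) hB,
    eventually_gt_atTop 0] with T hT hT0
  rw [zpow_neg, zpow_natCast, inv_mul_lt_iff₀ (by positivity)] at hT
  unfold BNorm
  linarith

end Cube

theorem norm_setIntegral_cube_shift_le {p : ℕ} {f : EuclideanSpace ℂ (Fin p) → ℂ}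
    (hf : Continuous f) {u : EuclideanSpace ℝ (Fin p) → ℂ} (hu : ∀ x, ‖u x‖ ≤ 1) (i : Fin p)
    (T t : ℝ) :
    ‖∫ x in cube p T, u x * f (toC p x + (t : ℂ) • EuclideanSpace.single i 1)‖ ≤
      ∫ x in cube p (T + |t|), ‖f (toC p x)‖ := by
  have hcont : Continuous fun x => ‖f (toC p x)‖ := (hf.comp continuous_toC).norm
  calc _ ≤ ∫ x in cube p T, ‖u x * f (toC p x + (t : ℂ) • EuclideanSpace.single i 1)‖ :=
        norm_integral_le_integral_norm _
    _ ≤ ∫ x in cube p T, ‖f (toC p (x + t • EuclideanSpace.single i 1))‖ := by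
        refine integral_mono_of_nonneg (.of_forall fun _ => norm_nonneg _)
          ((hcont.comp (continuous_add_const _)).continuousOn.integrableOn_compact
            (isCompact_cube T)) (.of_forall fun x => ?_)
        dsimp only
        rw [norm_mul, toC_add_smul_single]
        exact mul_le_of_le_one_left (norm_nonneg _) (hu x)
    _ ≤ ∫ x in cube p (T + |t|), ‖f (toC p x)‖ :=
        setIntegral_comp_add_right_le
          (hcont.continuousOn.integrableOn_compact (isCompact_cube _)) (fun _ => norm_nonneg _)
          fun x hx => add_mem_cube hx fun j => by
            by_cases hj : j = i <;> simp [hj, abs_nonneg]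

theorem add_inv_three_pow_mul_pow_le (p : ℕ) {B T s : ℝ} (hB : 0 ≤ B) (hs : 0 ≤ s)
    (hsT : 2 * s ≤ T) :
    (B + (3 ^ p)⁻¹) * (4 * (T + s)) ^ p ≤ 2 ^ (p + 1) * (1 + 2 * 3 ^ p * B) * T ^ p := by
  have h6 : (6 : ℝ) ^ p = 2 ^ p * 3 ^ p := by rw [← mul_pow]; norm_num
  have hT : 0 ≤ T := by linarith
  calc _ ≤ (B + (3 ^ p)⁻¹) * (6 * T) ^ p :=
        mul_le_mul_of_nonneg_left (pow_le_pow_left₀ (by positivity) (by linarith) p)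
          (by positivity)
    _ = (6 ^ p * B + 2 ^ p) * T ^ p := by rw [mul_pow, h6]; field_simp
    _ ≤ 2 ^ (p + 1) * (1 + 2 * 3 ^ p * B) * T ^ p := by
        gcongr
        rw [h6, pow_succ]
        nlinarith [pow_pos (two_pos (α := ℝ)) p, pow_pos (three_pos (α := ℝ)) p,
          mul_nonneg (mul_nonneg (pow_pos (two_pos (α := ℝ)) p).le
            (pow_pos (three_pos (α := ℝ)) p).le) hB]

theorem setIntegral_norm_shiftFirst_le {p : ℕ} (hp : 0 < p) {f : EuclideanSpace ℂ (Fin p) → ℂ}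
    {C₀ σ : ℝ} (hf : Differentiable ℂ f) (hbound : ∀ z, ‖f z‖ ≤ C₀ * Real.exp (σ * ‖z‖))
    {A T : ℝ} (hT : 0 < T) (hA : ∀ R ≥ T, ∫ x in cube p R, ‖f (toC p x)‖ ≤ A * (2 * R) ^ p)
    {s : ℝ} (hs : 0 ≤ s) :
    ∫ x in cube p T, ‖f (shiftFirst p hp s x)‖ ≤ A * (4 * (T + s)) ^ p * Real.exp (σ * s) := by
  set e : EuclideanSpace ℂ (Fin p) := EuclideanSpace.single ⟨0, hp⟩ 1
  have hcont : Continuous fun x => f (shiftFirst p hp s x) := by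
    simp_rw [shiftFirst_eq]; exact hf.continuous.comp (continuous_toC.add continuous_const)
  obtain ⟨u, hu_meas, hu1, hug⟩ := exists_measurable_mul_eq_norm hcont.measurable
  obtain ⟨R, hR⟩ := (isCompact_cube T).exists_bound_of_continuousOn continuous_toC.continuousOn
  set F : ℂ → ℂ := fun z => ∫ x in cube p T, u x * f (toC p x + z • e)
  have hFd : Differentiable ℂ F :=
    differentiable_setIntegral_mul (isCompact_cube T)
      (Measure.integrableOn_of_bounded (isCompact_cube T).measure_ne_top
        hu_meas.aestronglyMeasurable (.of_forall hu1))
      (G := fun x z => f (toC p x + z • e))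
      (hf.continuous.comp ((continuous_toC.comp continuous_fst).add
        (continuous_snd.smul continuous_const)))
      (fun x => hf.comp ((differentiable_id.smul_const e).const_add _))
  have hFgrow := norm_setIntegral_mul_comp_add_smul_le (μ := volume)
    (isCompact_cube T).measure_lt_top hbound hR (v := e) (by simp [e]) hu1
  have hFreal : ∀ t : ℝ, ‖F t‖ ≤ A * 2 ^ p * (T + |t|) ^ p := fun t =>
    (norm_setIntegral_cube_shift_le hf.continuous hu1 _ T t).trans <|
      (hA _ (by linarith [abs_nonneg t])).trans_eq (by rw [mul_pow, mul_assoc])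
  have hFIs : F (Complex.I * s) = ∫ x in cube p T, ‖f (shiftFirst p hp s x)‖ := by
    refine (integral_congr_ae (.of_forall fun x => ?_)).trans integral_ofReal
    have h := hug x
    rw [shiftFirst_eq] at h ⊢
    exact h
  have key := norm_apply_I_mul_le_of_norm_real_le hFd hT hFgrow hFreal hs
  rw [hFIs, Complex.norm_real, Real.norm_of_nonneg (integral_nonneg fun _ => norm_nonneg _)] at key
  refine key.trans_eq ?_
  rw [mul_pow, show (4 : ℝ) ^ p = 2 ^ p * 2 ^ p by rw [← mul_pow]; norm_num]
  ring

theorem lemma_shifted_integral_general (p : ℕ) (hp : 0 < p)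
    (f : EuclideanSpace ℂ (Fin p) → ℂ) (C₀ σ : ℝ)
    (hf : Differentiable ℂ f)
    (hbound : ∀ z, ‖f z‖ ≤ C₀ * Real.exp (σ * ‖z‖))
    (hB : BNormFinite p (fun x => f (toC p x))) :
    ∀ s₀ > (0:ℝ), ∃ T₀ : ℝ, ∀ T ≥ T₀, ∀ s : ℝ, 0 < s → s < s₀ →
      (∫ x in cube p T, ‖f (shiftFirst p hp s x)‖ * Real.exp (-s * σ)) ≤
        2^(p+1) * (1 + 2 * 3^p * BNorm p (fun x => f (toC p x))) * T^p := by
  intro s₀ _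
  set B := BNorm p fun x => f (toC p x)
  obtain ⟨T₁, hT₁⟩ := eventually_atTop.1 (eventually_integral_cube_le hB
    (η := (3 ^ p)⁻¹) (by positivity))
  refine ⟨max T₁ (2 * s₀), fun T hT s hs hss₀ => ?_⟩
  have hT₁T : T₁ ≤ T := le_of_max_le_left hT
  have hsT : 2 * s ≤ T := by linarith [le_of_max_le_right hT]
  have key := setIntegral_norm_shiftFirst_le hp hf hbound (by linarith)
    (fun R hR => hT₁ R (hT₁T.trans hR)) hs.le
  rw [integral_mul_const]
  calc _ ≤ (B + (3 ^ p)⁻¹) * (4 * (T + s)) ^ p * Real.exp (σ * s) * Real.exp (-s * σ) := by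
        gcongr
    _ = (B + (3 ^ p)⁻¹) * (4 * (T + s)) ^ p := by
        rw [mul_assoc, ← Real.exp_add, show σ * s + -s * σ = 0 by ring, Real.exp_zero, mul_one]
    _ ≤ _ := add_inv_three_pow_mul_pow_le p (BNorm_nonneg hB) hs.le hsT

/-- the Lemma of the paper. -/
theorem lemma_shifted_integral (p : ℕ) (hp : 0 < p)
    (f : EuclideanSpace ℂ (Fin p) → ℂ) (C₀ σ : ℝ)
    (hf : Differentiable ℂ f)
    (hbound : ∀ z, ‖f z‖ ≤ C₀ * Real.exp (σ * ‖z‖))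
    (hloc : LocallyIntegrable (fun x => f (toC p x)) volume)
    (hB : BNormFinite p (fun x => f (toC p x))) :
    ∀ s₀ > (0:ℝ), ∃ T₀ : ℝ, ∀ T ≥ T₀, ∀ s : ℝ, 0 < s → s < s₀ →
      (∫ x in cube p T, ‖f (shiftFirst p hp s x)‖ * Real.exp (-s * σ)) ≤
        2^(p+1) * (1 + 2 * 3^p * BNorm p (fun x => f (toC p x))) * T^p :=
  lemma_shifted_integral_general p hp f C₀ σ hf hbound hB
end
end

section
/- Let g be holomorphic in the upper half-plane ℂ⁺, continuous on its closure, of exponential type (|g(w)| ≤ c e^{a|w|}), and bounded on the real axis. Then for every w ∈ ℂ⁺, |g(w)| ≤ (sup_{t ∈ ℝ} |g(t)|) · e^{h · Im w}, where h = limsup_{t→+∞} (log|g(it)|)/t. -/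
/-!
For `k > h`, the function `f z = exp (i k z) • g z` has `‖f z‖ = e^{-k Im z} ‖g z‖`: it agrees
in norm with `g` on the real axis, is bounded on the positive imaginary axis, and is still of
exponential type. The Phragmén–Lindelöf principle (the right half-plane version, rotated by
`i`) bounds it by `sup_ℝ ‖g‖`, so `‖g w‖ ≤ sup_ℝ ‖g‖ · e^{k Im w}`; let `k ↓ h`.
-/

open Complex Filter Asymptotics Bornology Set
open scoped Topology

theorem norm_cexp_I_mul_ofReal_mul (k : ℝ) (z : ℂ) :
    ‖cexp (I * k * z)‖ = Real.exp (-k * z.im) := by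
  simp [Complex.norm_exp]

theorem Real.le_exp_mul_of_log_div_lt {y t k : ℝ} (hy : 0 ≤ y) (ht : 0 < t)
    (h : Real.log y / t < k) : y ≤ Real.exp (k * t) := by
  rcases hy.eq_or_lt with rfl | hy
  · exact (Real.exp_pos _).le
  · rw [div_lt_iff₀ ht] at h
    exact ((Real.log_lt_iff_lt_exp hy).1 h).le

theorem isBoundedUnder_log_div_of_le_exp {u : ℝ → ℝ} {c a : ℝ} (hu0 : ∀ t, 0 ≤ u t)
    (hu : ∀ t, 0 ≤ t → u t ≤ c * Real.exp (a * t)) :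
    IsBoundedUnder (· ≤ ·) atTop fun t => Real.log (u t) / t := by
  refine isBoundedUnder_of_eventually_le (a := max 0 (|Real.log c| + a)) ?_
  filter_upwards [eventually_ge_atTop 1] with t ht
  have ht0 : 0 < t := one_pos.trans_le ht
  rcases (hu0 t).eq_or_lt with h0 | hpos
  · simp [← h0]
  have hc : 0 < c := pos_of_mul_pos_left (hpos.trans_le (hu t ht0.le)) (Real.exp_pos _).le
  have hlog : Real.log (u t) ≤ Real.log c + a * t := by
    simpa [Real.log_mul hc.ne' (Real.exp_ne_zero _)] using Real.log_le_log hpos (hu t ht0.le)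
  calc Real.log (u t) / t ≤ Real.log c / t + a := by
        rw [div_add' _ _ _ ht0.ne']; gcongr
    _ ≤ |Real.log c| + a := by
        gcongr
        calc Real.log c / t ≤ |Real.log c| / t := by gcongr; exact le_abs_self _
          _ ≤ |Real.log c| := div_le_self (abs_nonneg _) ht
    _ ≤ _ := le_max_right _ _

section

variable {E : Type*} [NormedAddCommGroup E]

theorem isBigO_exp_rpow_of_exponentialType {f : ℂ → E} {s : Set ℂ} {c a : ℝ}
    (h : ∀ z ∈ s, ‖f z‖ ≤ c * Real.exp (a * ‖z‖)) :
    ∃ p < (2 : ℝ), ∃ B, f =O[cobounded ℂ ⊓ 𝓟 s] fun z => Real.exp (B * ‖z‖ ^ p) :=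
  ⟨1, one_lt_two, a, IsBigO.of_bound c <| eventually_inf_principal.2 <|
    Eventually.of_forall fun z hz => by simpa using h z hz⟩

variable [NormedSpace ℂ E]

theorem PhragmenLindelof.upper_half_plane_of_bounded_on_imag_s4 {f : ℂ → E} {C : ℝ}
    (hd : DiffContOnCl ℂ f {z | 0 < z.im})
    (hexp : ∃ c < (2 : ℝ), ∃ B,
      f =O[cobounded ℂ ⊓ 𝓟 {z | 0 < z.im}] fun z => Real.exp (B * ‖z‖ ^ c))
    (him : IsBoundedUnder (· ≤ ·) atTop fun t : ℝ => ‖f (I * t)‖)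
    (hre : ∀ x : ℝ, ‖f x‖ ≤ C)
    {z : ℂ} (hz : 0 ≤ z.im) : ‖f z‖ ≤ C := by
  have hmaps : MapsTo (I * ·) {z : ℂ | 0 < z.re} {z | 0 < z.im} := fun z hz => by simpa using hz
  have hrot : Tendsto (I * ·) (cobounded ℂ ⊓ 𝓟 {z | 0 < z.re})
      (cobounded ℂ ⊓ 𝓟 {z | 0 < z.im}) :=
    (tendsto_comap.mono_left (comap_mul_left_cobounded I_ne_zero).ge).inf
      (tendsto_principal_principal.2 hmaps)
  have hF := PhragmenLindelof.right_half_plane_of_bounded_on_real (f := fun z => f (I * z))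
    (hd.comp (differentiable_id.const_mul I).diffContOnCl hmaps)
    (by
      obtain ⟨c, hc, B, hO⟩ := hexp
      exact ⟨c, hc, B, by simpa [Function.comp_def] using hO.comp_tendsto hrot⟩)
    him (fun x => by simpa [mul_left_comm I, ← ofReal_neg] using hre (-x))
    (z := -I * z) (by simpa using hz)
  simpa [← mul_assoc] using hF

theorem norm_le_mul_exp_im_of_exponentialType {g : ℂ → E} {c a k M : ℝ}
    (hd : DiffContOnCl ℂ g {w | 0 < w.im})
    (hbound : ∀ w : ℂ, 0 < w.im → ‖g w‖ ≤ c * Real.exp (a * ‖w‖))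
    (him : ∀ᶠ t : ℝ in atTop, ‖g (I * t)‖ ≤ Real.exp (k * t)) (hre : ∀ x : ℝ, ‖g x‖ ≤ M)
    {w : ℂ} (hw : 0 ≤ w.im) : ‖g w‖ ≤ M * Real.exp (k * w.im) := by
  set f : ℂ → E := fun z => cexp (I * k * z) • g z
  have hnorm (z : ℂ) : ‖f z‖ = Real.exp (-k * z.im) * ‖g z‖ := by
    rw [norm_smul, norm_cexp_I_mul_ofReal_mul]
  have hf_type (z : ℂ) (hz : z ∈ {w : ℂ | 0 < w.im}) :
      ‖f z‖ ≤ c * Real.exp ((a + |k|) * ‖z‖) := by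
    have hk : -k * z.im ≤ |k| * ‖z‖ := by
      calc -k * z.im ≤ |k * z.im| := by rw [← abs_neg, ← neg_mul]; exact le_abs_self _
        _ ≤ |k| * ‖z‖ := by rw [abs_mul]; gcongr; exact abs_im_le_norm z
    calc ‖f z‖ ≤ Real.exp (|k| * ‖z‖) * (c * Real.exp (a * ‖z‖)) := by
          rw [hnorm]; gcongr; exact hbound z hz
      _ = c * Real.exp ((a + |k|) * ‖z‖) := by rw [mul_left_comm, ← Real.exp_add]; ring_nf
  have hf_im : IsBoundedUnder (· ≤ ·) atTop fun t : ℝ => ‖f (I * t)‖ := by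
    refine isBoundedUnder_of_eventually_le (a := 1) ?_
    filter_upwards [him] with t ht
    calc ‖f (I * t)‖ ≤ Real.exp (-k * t) * Real.exp (k * t) := by
          rw [hnorm, show (I * (t : ℂ)).im = t by simp]; gcongr
      _ = 1 := by rw [← Real.exp_add]; simp
  have hf := PhragmenLindelof.upper_half_plane_of_bounded_on_imag_s4
    ((differentiable_id.const_mul _).cexp.diffContOnCl.smul hd)
    (isBigO_exp_rpow_of_exponentialType hf_type) hf_im
    (fun x => by rw [hnorm]; simpa using hre x) hw
  calc ‖g w‖ = Real.exp (k * w.im) * ‖f w‖ := by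
        rw [hnorm, ← mul_assoc, ← Real.exp_add]; simp
    _ ≤ M * Real.exp (k * w.im) := by rw [mul_comm]; gcongr

end

/-- Phragmén–Lindelöf principle in the upper half-plane. -/
theorem phragmen_lindelof_halfplane (g : ℂ → ℂ) (c a : ℝ)
    (hg : DifferentiableOn ℂ g {w : ℂ | 0 < w.im})
    (hc : ContinuousOn g {w : ℂ | 0 ≤ w.im})
    (hbound : ∀ w : ℂ, 0 ≤ w.im → ‖g w‖ ≤ c * Real.exp (a * ‖w‖))
    (hbdd : BddAbove (Set.range fun t : ℝ => ‖g t‖)) :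
    ∀ w : ℂ, 0 < w.im →
      ‖g w‖ ≤ (⨆ t : ℝ, ‖g (t : ℂ)‖) *
        Real.exp ((Filter.limsup (fun t : ℝ => Real.log ‖g (Complex.I * t)‖ / t)
          Filter.atTop) * w.im) := by
  intro w hw
  set L := limsup (fun t : ℝ => Real.log ‖g (I * t)‖ / t) atTop
  have hd : DiffContOnCl ℂ g {w | 0 < w.im} := ⟨hg, by rwa [closure_setOfPred_lt_im]⟩
  have hL : IsBoundedUnder (· ≤ ·) atTop fun t : ℝ => Real.log ‖g (I * t)‖ / t :=
    isBoundedUnder_log_div_of_le_exp (fun _ => norm_nonneg _)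
      (fun t ht => by simpa [abs_of_nonneg ht] using hbound (I * t) (by simpa using ht))
  have hk (k : ℝ) (hLk : L < k) : ‖g w‖ ≤ (⨆ t : ℝ, ‖g t‖) * Real.exp (k * w.im) := by
    refine norm_le_mul_exp_im_of_exponentialType hd (fun z hz => hbound z hz.le) ?_
      (fun x => le_ciSup hbdd x) hw.le
    filter_upwards [eventually_lt_of_limsup_lt hLk hL, eventually_gt_atTop 0] with t hlt ht
    exact Real.le_exp_mul_of_log_div_lt (norm_nonneg _) ht hlt
  have hcont : Continuous fun k : ℝ => (⨆ t : ℝ, ‖g t‖) * Real.exp (k * w.im) := by fun_prop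
  exact ge_of_tendsto ((hcont.tendsto L).mono_left (nhdsWithin_le_nhds (s := Ioi L)))
    (eventually_nhdsWithin_of_forall hk)
end

section
/- Let F be holomorphic on a neighborhood of the strip A = {z ∈ ℂ : |Im z| ≤ 1}, and suppose |F(z)·(sin z / z)^p| ≤ C for all z ∈ A with z ∉ ⋃_{n ∈ ℤ} B(nπ, 1/2). Then |F(z)·(sin z / z)^p| ≤ 2^p·C' for all z ∈ A, where C' is a constant obtained via the maximum principle; in particular |F(z)| ≤ C'' (1 + |z|)^p on A for a suitable constant C''. -/
/-! On each disc `B(nπ, 1/2)` the maximum principle bounds `|F|` and `|F · sinc^p|` by their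
values on the boundary circle, which lies in the strip and, the centres being `π` apart, off all
the discs. Off the discs, Jordan's inequality and `|sinh y| ≥ |y|` give
`|sin z| ≥ (2/π) dist(z, πℤ) ≥ 1/π`, hence `|sinc z| ≥ 1/(π|z|)`, which turns the bound on
`F · sinc^p` there into `|F z| ≤ C (π|z|)^p`. -/

open MeasureTheory Filter

noncomputable section

/-- sin z / z extended holomorphically by 1 at z = 0. -/
def sinc (z : ℂ) : ℂ := if z = 0 then 1 else Complex.sin z / z

open Metric Set
open scoped Real

theorem sinc_eq_dslope : sinc = dslope Complex.sin 0 := by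
  funext z
  rcases eq_or_ne z 0 with rfl | hz
  · simp [sinc, Complex.deriv_sin]
  · simp [sinc, hz, dslope_of_ne, slope_def_field, div_eq_mul_inv]

theorem differentiable_sinc : Differentiable ℂ sinc := by
  rw [sinc_eq_dslope, ← differentiableOn_univ, Complex.differentiableOn_dslope univ_mem]
  exact Complex.differentiable_sin.differentiableOn

theorem Complex.norm_sin_sq (z : ℂ) :
    ‖Complex.sin z‖ ^ 2 = Real.sin z.re ^ 2 + Real.sinh z.im ^ 2 := by
  rw [Complex.sq_norm, Complex.normSq_apply, Complex.sin_eq]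
  simp only [Complex.add_re, Complex.add_im, Complex.mul_re, Complex.mul_im, Complex.I_re,
    Complex.I_im, Complex.ofReal_re, Complex.ofReal_im, ← Complex.ofReal_sin,
    ← Complex.ofReal_cos, ← Complex.ofReal_sinh, ← Complex.ofReal_cosh]
  nlinarith [Real.cosh_sq z.im, Real.sin_sq_add_cos_sq z.re]

theorem Real.sq_le_sinh_sq (y : ℝ) : y ^ 2 ≤ Real.sinh y ^ 2 := by
  rcases le_total 0 y with hy | hy
  · exact pow_le_pow_left₀ hy (Real.self_le_sinh_iff.2 hy) 2
  · have hy' : 0 ≤ -y := neg_nonneg.2 hy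
    simpa using pow_le_pow_left₀ hy' (Real.self_le_sinh_iff.2 hy') 2

theorem Complex.two_div_pi_mul_norm_sub_round_le_norm_sin (z : ℂ) :
    2 / π * ‖z - (round (z.re / π) : ℂ) * π‖ ≤ ‖Complex.sin z‖ := by
  set n := round (z.re / π)
  set t := z.re - n * π
  have ht : |t| ≤ π / 2 := by
    have h := abs_sub_round (z.re / π)
    rw [show t = (z.re / π - n) * π by field_simp [t]; ring, abs_mul, abs_of_pos Real.pi_pos]
    nlinarith [Real.pi_pos]
  have hsin : |Real.sin t| = |Real.sin z.re| := by
    rw [Real.sin_sub_int_mul_pi, abs_mul, abs_neg_one_zpow, one_mul]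
  have hdist : ‖z - (n : ℂ) * π‖ ^ 2 = t ^ 2 + z.im ^ 2 := by
    rw [Complex.sq_norm, Complex.normSq_apply]
    simp only [Complex.sub_re, Complex.sub_im, Complex.mul_re, Complex.mul_im,
      Complex.intCast_re, Complex.intCast_im, Complex.ofReal_re, Complex.ofReal_im, t]
    ring
  have hjordan : (2 / π * |t|) ^ 2 ≤ Real.sin z.re ^ 2 := by
    rw [← sq_abs (Real.sin z.re), ← hsin]
    exact pow_le_pow_left₀ (by positivity) (Real.mul_abs_le_abs_sin ht) 2
  have him : (2 / π) ^ 2 * z.im ^ 2 ≤ Real.sinh z.im ^ 2 := by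
    have h1 : (2 / π) ^ 2 ≤ 1 :=
      pow_le_one₀ (by positivity) ((div_le_one Real.pi_pos).2 Real.two_le_pi)
    nlinarith [sq_nonneg z.im, Real.sq_le_sinh_sq z.im]
  refine pow_le_pow_iff_left₀ (by positivity) (norm_nonneg _) two_ne_zero |>.1 ?_
  rw [Complex.norm_sin_sq, mul_pow, hdist]
  nlinarith [sq_abs t]

theorem Complex.two_mul_div_pi_le_norm_sin {r : ℝ} {z : ℂ}
    (hz : z ∉ ⋃ n : ℤ, ball ((n : ℂ) * π) r) : 2 * r / π ≤ ‖Complex.sin z‖ := by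
  have hr : r ≤ ‖z - (round (z.re / π) : ℂ) * π‖ := by
    simp only [mem_iUnion, mem_ball, not_exists, not_lt, dist_eq_norm] at hz
    exact hz _
  calc 2 * r / π = 2 / π * r := by ring
    _ ≤ 2 / π * ‖z - (round (z.re / π) : ℂ) * π‖ := by gcongr
    _ ≤ ‖Complex.sin z‖ := z.two_div_pi_mul_norm_sub_round_le_norm_sin

theorem two_mul_le_pi_mul_norm_mul_norm_sinc {r : ℝ} {z : ℂ}
    (hz : z ∉ ⋃ n : ℤ, ball ((n : ℂ) * π) r) : 2 * r ≤ π * ‖z‖ * ‖sinc z‖ := by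
  rcases eq_or_ne z 0 with rfl | hz0
  · have hr : r ≤ 0 := by
      by_contra! hr
      exact hz (mem_iUnion.2 ⟨0, by simpa using hr⟩)
    simpa using mul_nonpos_of_nonneg_of_nonpos zero_le_two hr
  · have := Complex.two_mul_div_pi_le_norm_sin hz
    rw [div_le_iff₀ Real.pi_pos] at this
    rw [sinc, if_neg hz0, norm_div, mul_assoc, mul_div_cancel₀ _ (norm_ne_zero_iff.2 hz0)]
    linarith

theorem norm_le_pow_mul_of_norm_mul_pow_le {𝕜 : Type*} [NormedDivisionRing 𝕜] {a s : 𝕜}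
    {K C : ℝ} {p : ℕ} (hK : 0 ≤ K) (hs : 1 ≤ K * ‖s‖) (h : ‖a * s ^ p‖ ≤ C) :
    ‖a‖ ≤ K ^ p * C :=
  calc ‖a‖ ≤ ‖a‖ * (K * ‖s‖) ^ p := le_mul_of_one_le_right (norm_nonneg a) (one_le_pow₀ hs)
    _ = K ^ p * ‖a * s ^ p‖ := by rw [norm_mul, norm_pow]; ring
    _ ≤ K ^ p * C := by gcongr

theorem Complex.abs_im_le_of_mem_closedBall {c w : ℂ} {r : ℝ} (hc : c.im = 0)
    (hw : w ∈ closedBall c r) : |w.im| ≤ r := by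
  simpa [hc] using (Complex.abs_im_le_norm (w - c)).trans (mem_closedBall_iff_norm.1 hw)

theorem notMem_iUnion_ball_int_mul_pi_of_mem_sphere {r : ℝ} (hr : r ≤ π / 2) {n : ℤ} {w : ℂ}
    (hw : w ∈ sphere ((n : ℂ) * π) r) : w ∉ ⋃ m : ℤ, ball ((m : ℂ) * π) r := by
  simp only [mem_iUnion, mem_ball, not_exists, not_lt]
  intro m
  rcases eq_or_ne n m with rfl | hnm
  · exact (mem_sphere.1 hw).ge
  have hcentres : π ≤ dist ((n : ℂ) * π) ((m : ℂ) * π) := by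
    rw [dist_eq_norm, ← sub_mul, ← Int.cast_sub, norm_mul, Complex.norm_intCast,
      Complex.norm_real, Real.norm_of_nonneg Real.pi_pos.le]
    exact le_mul_of_one_le_left Real.pi_pos.le
      (by exact_mod_cast Int.one_le_abs (sub_ne_zero.2 hnm))
  linarith [dist_triangle_left ((n : ℂ) * π) ((m : ℂ) * π) w, mem_sphere.1 hw]

theorem Complex.exists_mem_sphere_norm_le {E : Type*} [NormedAddCommGroup E] [NormedSpace ℂ E]
    {f : ℂ → E} {c z : ℂ} {r : ℝ} (hr : 0 < r) (hf : DifferentiableOn ℂ f (closedBall c r))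
    (hz : z ∈ closedBall c r) : ∃ w ∈ sphere c r, ‖f z‖ ≤ ‖f w‖ := by
  rw [← closure_ball c hr.ne'] at hf hz
  obtain ⟨w, hw, hmax⟩ := Complex.exists_mem_frontier_isMaxOn_norm isBounded_ball
    (nonempty_ball.2 hr) hf.diffContOnCl
  exact ⟨w, frontier_ball c hr.ne' ▸ hw, hmax hz⟩

theorem exists_notMem_iUnion_ball_int_mul_pi_norm_le {E : Type*} [NormedAddCommGroup E]
    [NormedSpace ℂ E] {f : ℂ → E} {a r : ℝ} (hr : 0 < r) (hrπ : r ≤ π / 2) (hra : r ≤ a)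
    (hf : DifferentiableOn ℂ f {z | |z.im| ≤ a}) {z : ℂ} (hz : |z.im| ≤ a) :
    ∃ w, |w.im| ≤ a ∧ w ∉ ⋃ n : ℤ, ball ((n : ℂ) * π) r ∧ ‖w‖ ≤ ‖z‖ + 2 * r ∧
      ‖f z‖ ≤ ‖f w‖ := by
  by_cases hdisc : ∃ n : ℤ, z ∈ closedBall ((n : ℂ) * π) r
  · obtain ⟨n, hzn⟩ := hdisc
    have hsub : closedBall ((n : ℂ) * π) r ⊆ {z | |z.im| ≤ a} := fun w hw =>
      (Complex.abs_im_le_of_mem_closedBall (by simp) hw).trans hra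
    obtain ⟨w, hw, hle⟩ := Complex.exists_mem_sphere_norm_le hr (hf.mono hsub) hzn
    refine ⟨w, hsub (sphere_subset_closedBall hw),
      notMem_iUnion_ball_int_mul_pi_of_mem_sphere hrπ hw,
      norm_le_of_mem_closedBall (mem_closedBall.2 ?_), hle⟩
    linarith [dist_triangle_right w z ((n : ℂ) * π), mem_sphere.1 hw, mem_closedBall.1 hzn]
  · refine ⟨z, hz, ?_, by linarith, le_rfl⟩
    simp only [not_exists] at hdisc
    simpa using fun n hzn => hdisc n (ball_subset_closedBall hzn)

/-- a bound on F(z)·(sin z/z)^p off the discs around the zeros nπ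
extends, via the maximum principle, to the whole strip |Im z| ≤ 1, and yields
polynomial growth of F on the strip. -/
theorem strip_max_principle (p : ℕ) (F : ℂ → ℂ) (C : ℝ)
    (hF : ∃ U : Set ℂ, IsOpen U ∧ {z : ℂ | |z.im| ≤ 1} ⊆ U ∧ DifferentiableOn ℂ F U)
    (hbound : ∀ z : ℂ, |z.im| ≤ 1 →
      z ∉ ⋃ n : ℤ, Metric.ball ((n : ℂ) * Real.pi) (1/2) →
      ‖F z * (sinc z)^p‖ ≤ C) :
    (∃ C' : ℝ, ∀ z : ℂ, |z.im| ≤ 1 → ‖F z * (sinc z)^p‖ ≤ 2^p * C') ∧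
    (∃ C'' : ℝ, ∀ z : ℂ, |z.im| ≤ 1 → ‖F z‖ ≤ C'' * (1 + ‖z‖)^p) := by
  obtain ⟨U, -, hU, hFU⟩ := hF
  have hFstrip : DifferentiableOn ℂ F {z : ℂ | |z.im| ≤ 1} := hFU.mono hU
  have hGstrip : DifferentiableOn ℂ (fun z => F z * sinc z ^ p) {z : ℂ | |z.im| ≤ 1} :=
    hFstrip.mul (differentiable_sinc.pow p).differentiableOn
  have hr : (1 / 2 : ℝ) ≤ π / 2 := by linarith [Real.pi_gt_three]
  refine ⟨⟨C / 2 ^ p, fun z hz => ?_⟩, ⟨π ^ p * C, fun z hz => ?_⟩⟩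
  · obtain ⟨w, hw, hwD, -, hle⟩ :=
      exists_notMem_iUnion_ball_int_mul_pi_norm_le (by norm_num) hr (by norm_num) hGstrip hz
    rw [mul_div_cancel₀ _ (by positivity)]
    exact hle.trans (hbound w hw hwD)
  · obtain ⟨w, hw, hwD, hwz, hle⟩ :=
      exists_notMem_iUnion_ball_int_mul_pi_norm_le (by norm_num) hr (by norm_num) hFstrip hz
    have hC : 0 ≤ C := (norm_nonneg _).trans (hbound w hw hwD)
    calc ‖F z‖ ≤ ‖F w‖ := hle
      _ ≤ (π * ‖w‖) ^ p * C := norm_le_pow_mul_of_norm_mul_pow_le (by positivity)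
          (by linarith [two_mul_le_pi_mul_norm_mul_norm_sinc hwD]) (hbound w hw hwD)
      _ ≤ (π * (1 + ‖z‖)) ^ p * C := by gcongr; linarith
      _ = π ^ p * C * (1 + ‖z‖) ^ p := by rw [mul_pow]; ring

end
end

section
/- Let f be entire on ℂ, |f(z)| ≤ C₀ e^{σ|z|}, with f bounded on ℝ. If λ ∈ ℝ with |λ| > σ, then lim_{T→∞} (2T)^{-1} ∫_{-T}^{T} f(x) e^{-iλx} dx = 0. -/
/-!
By Phragmén–Lindelöf, `‖f (x + y i)‖ ≤ K e^{σ |y|}`. Cauchy's theorem moves the integral of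
`f z e^{-iλz}` over `[-T, T]` to the line `Im z = y`, with the sign of `y` chosen so that
`λ y = -|λ| |y|`; there the integrand is at most `K e^{(σ - |λ|) |y|}`, and the two vertical sides
of the rectangle contribute a bound independent of `T`. So the mean is eventually at most
`K e^{(σ - |λ|) |y|} + O(1/T)`, and `|y|` can be taken arbitrarily large.
-/

open MeasureTheory Filter intervalIntegral
open Set Complex

lemma exists_isBigO_exp_rpow_of_norm_le {E : Type*} [Norm E] {g : ℂ → E} {C B : ℝ} (l : Filter ℂ)
    (h : ∀ z, ‖g z‖ ≤ C * Real.exp (B * ‖z‖)) :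
    ∃ c < (2 : ℝ), ∃ B', g =O[l] fun z => Real.exp (B' * ‖z‖ ^ c) := by
  refine ⟨1, one_lt_two, B, Asymptotics.IsBigO.of_bound C (Eventually.of_forall fun z => ?_)⟩
  simpa [Real.rpow_one, Real.norm_eq_abs, abs_of_pos (Real.exp_pos _)] using h z

section PhragmenLindelof

variable {E : Type*} [NormedAddCommGroup E] [NormedSpace ℂ E]

/- Multiplying by `exp (I σ z)` cancels the growth along the positive imaginary axis, so the
Phragmén–Lindelöf principle applies in the first and second quadrants. -/
lemma norm_le_mul_exp_im_of_bounded_on_real {f : ℂ → E} {C σ M : ℝ} (hf : Differentiable ℂ f)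
    (hC : ∀ z, ‖f z‖ ≤ C * Real.exp (σ * ‖z‖)) (hM : ∀ x : ℝ, ‖f x‖ ≤ M)
    {z : ℂ} (hz : 0 ≤ z.im) : ‖f z‖ ≤ max M C * Real.exp (σ * z.im) := by
  set g : ℂ → E := fun w => exp (I * σ * w) • f w
  have hg : Differentiable ℂ g := (by fun_prop : Differentiable ℂ fun w => exp (I * σ * w)).smul hf
  have hC0 : 0 ≤ C := by simpa using (norm_nonneg _).trans (hC 0)
  have norm_g : ∀ w, ‖g w‖ = Real.exp (-(σ * w.im)) * ‖f w‖ := fun w => by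
    simp [g, norm_smul, Complex.norm_exp, Complex.mul_re]
  have growth : ∀ w, ‖g w‖ ≤ C * Real.exp (2 * |σ| * ‖w‖) := fun w => by
    have : σ * ‖w‖ - σ * w.im ≤ 2 * |σ| * ‖w‖ := by
      have h₁ := mul_le_mul_of_nonneg_right (le_abs_self σ) (norm_nonneg w)
      have h₂ : -(σ * w.im) ≤ |σ| * ‖w‖ := by
        calc -(σ * w.im) ≤ |σ * w.im| := neg_le_abs _
          _ = |σ| * |w.im| := abs_mul _ _
          _ ≤ |σ| * ‖w‖ := by gcongr; exact abs_im_le_norm w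
      linarith
    calc ‖g w‖ ≤ Real.exp (-(σ * w.im)) * (C * Real.exp (σ * ‖w‖)) := by
          rw [norm_g]; gcongr; exact hC w
      _ = C * Real.exp (σ * ‖w‖ - σ * w.im) := by rw [sub_eq_add_neg, Real.exp_add]; ring
      _ ≤ C * Real.exp (2 * |σ| * ‖w‖) := by gcongr
  have on_real : ∀ x : ℝ, ‖g x‖ ≤ max M C := fun x => by
    simpa [norm_g] using (hM x).trans (le_max_left M C)
  have on_imag : ∀ x : ℝ, 0 ≤ x → ‖g (x * I)‖ ≤ max M C := fun x hx => by
    have hfx := hC (x * I)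
    simp only [norm_mul, norm_real, Real.norm_of_nonneg hx, norm_I, mul_one] at hfx
    calc ‖g (x * I)‖ ≤ Real.exp (-(σ * x)) * (C * Real.exp (σ * x)) := by
          rw [norm_g]; simpa using mul_le_mul_of_nonneg_left hfx (Real.exp_pos _).le
      _ = C := by rw [mul_left_comm, ← Real.exp_add, neg_add_cancel, Real.exp_zero, mul_one]
      _ ≤ max M C := le_max_right M C
  have hgz : ‖g z‖ ≤ max M C := by
    rcases le_total 0 z.re with hre | hre
    · exact PhragmenLindelof.quadrant_I hg.diffContOnCl (exists_isBigO_exp_rpow_of_norm_le _ growth)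
        (fun x _ => on_real x) on_imag hre hz
    · exact PhragmenLindelof.quadrant_II hg.diffContOnCl (exists_isBigO_exp_rpow_of_norm_le _ growth)
        (fun x _ => on_real x) on_imag hre hz
  calc ‖f z‖ = Real.exp (σ * z.im) * ‖g z‖ := by
        rw [norm_g, ← mul_assoc, ← Real.exp_add, add_neg_cancel, Real.exp_zero, one_mul]
    _ ≤ max M C * Real.exp (σ * z.im) := by rw [mul_comm]; gcongr

lemma norm_le_mul_exp_abs_im_of_bounded_on_real {f : ℂ → E} {C σ M : ℝ}
    (hf : Differentiable ℂ f) (hC : ∀ z, ‖f z‖ ≤ C * Real.exp (σ * ‖z‖))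
    (hM : ∀ x : ℝ, ‖f x‖ ≤ M) (z : ℂ) : ‖f z‖ ≤ max M C * Real.exp (σ * |z.im|) := by
  rcases le_total 0 z.im with hz | hz
  · simpa [abs_of_nonneg hz] using norm_le_mul_exp_im_of_bounded_on_real hf hC hM hz
  · have := norm_le_mul_exp_im_of_bounded_on_real (f := fun w => f (-w)) (hf.comp differentiable_neg)
      (fun w => by simpa using hC (-w)) (fun x => by simpa using hM (-x))
      (z := -z) (by simpa using hz)
    simpa [abs_of_nonpos hz] using this

end PhragmenLindelof

section ContourShift

variable {E : Type*} [NormedAddCommGroup E] [NormedSpace ℂ E]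

lemma integral_eq_integral_add_mul_I_of_differentiable {g : ℂ → E} (hg : Differentiable ℂ g)
    (T y : ℝ) :
    (∫ x in (-T)..T, g x) = (∫ x in (-T)..T, g (x + y * I))
      - I • (∫ t in (0 : ℝ)..y, g (T + t * I)) + I • (∫ t in (0 : ℝ)..y, g (-T + t * I)) := by
  have h := integral_boundary_rect_eq_zero_of_differentiableOn g ((-T : ℝ) : ℂ) (T + y * I)
    hg.differentiableOn
  simp only [ofReal_re, ofReal_im, add_re, add_im, mul_re, mul_im, I_re, I_im, neg_re, neg_im,
    neg_zero, mul_zero, mul_one, sub_zero, add_zero, zero_add, ofReal_zero, zero_mul, ofReal_neg] at h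
  rw [← sub_eq_zero, ← h]
  abel

lemma norm_integral_le_of_norm_le_on_strip {g : ℂ → E} (hg : Differentiable ℂ g) {T y A B : ℝ}
    (hT : 0 ≤ T) (hA : ∀ x : ℝ, ‖g (x + y * I)‖ ≤ A) (hB : ∀ z : ℂ, |z.im| ≤ |y| → ‖g z‖ ≤ B) :
    ‖∫ x in (-T)..T, g x‖ ≤ A * (2 * T) + 2 * (B * |y|) := by
  have side : ∀ a : ℝ, ‖∫ t in (0 : ℝ)..y, g (a + t * I)‖ ≤ B * |y| := fun a => by
    have := norm_integral_le_of_norm_le_const (f := fun t : ℝ => g (a + t * I)) fun t ht =>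
      hB _ <| by simpa using abs_sub_left_of_mem_uIcc (a := 0) (b := y) (uIoc_subset_uIcc ht)
    rwa [sub_zero] at this
  have top : ‖∫ x in (-T)..T, g (x + y * I)‖ ≤ A * (2 * T) := by
    have := norm_integral_le_of_norm_le_const (a := -T) (b := T) fun x _ => hA x
    rwa [sub_neg_eq_add, ← two_mul, abs_of_nonneg (by positivity)] at this
  have left := side (-T)
  push_cast at left
  rw [integral_eq_integral_add_mul_I_of_differentiable hg T y]
  refine (norm_add_le _ _).trans ((add_le_add_left (norm_sub_le _ _) _).trans ?_)
  simp only [norm_smul, norm_I, one_mul]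
  linarith [side T]

end ContourShift

lemma norm_mul_exp_neg_I_mul_le {f : ℂ → ℂ} {C σ M : ℝ} (hf : Differentiable ℂ f)
    (hC : ∀ z, ‖f z‖ ≤ C * Real.exp (σ * ‖z‖)) (hM : ∀ x : ℝ, ‖f x‖ ≤ M) (lam : ℝ) (z : ℂ) :
    ‖f z * exp (-I * lam * z)‖ ≤ max M C * Real.exp (σ * |z.im| + lam * z.im) := by
  have hMC : 0 ≤ max M C := (norm_nonneg _).trans ((hM 0).trans (le_max_left M C))
  rw [norm_mul, Complex.norm_exp, Real.exp_add, ← mul_assoc]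
  gcongr
  · exact norm_le_mul_exp_abs_im_of_bounded_on_real hf hC hM z
  · simp [Complex.mul_re]

lemma mul_abs_add_mul_le_abs_add_abs_mul (a b : ℝ) {t s : ℝ} (ht : |t| ≤ s) :
    a * |t| + b * t ≤ (|a| + |b|) * s := by
  have ha : a * |t| ≤ |a| * s :=
    (mul_le_mul_of_nonneg_right (le_abs_self a) (abs_nonneg t)).trans
      (mul_le_mul_of_nonneg_left ht (abs_nonneg a))
  have hb : b * t ≤ |b| * s :=
    (le_abs_self _).trans ((abs_mul b t).trans_le (mul_le_mul_of_nonneg_left ht (abs_nonneg b)))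
  linarith

lemma tendsto_zero_of_norm_le_add_div {E : Type*} [SeminormedAddCommGroup E] {F : ℝ → E}
    {a : ℝ → ℝ} (ha : Tendsto a atTop (nhds 0))
    (h : ∀ᶠ s in atTop, ∃ C, ∀ T > 0, ‖F T‖ ≤ a s + C / T) : Tendsto F atTop (nhds 0) := by
  rw [NormedAddGroup.tendsto_nhds_zero]
  intro ε hε
  obtain ⟨s, has, C, hC⟩ := ((ha.eventually (gt_mem_nhds (half_pos hε))).and h).exists
  have hC_div : Tendsto (fun T : ℝ => C / T) atTop (nhds 0) := tendsto_const_nhds.div_atTop tendsto_id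
  filter_upwards [eventually_gt_atTop 0, hC_div.eventually (gt_mem_nhds (half_pos hε))]
    with T hT hCT
  linarith [hC T hT]

lemma exists_abs_eq_and_mul_eq_neg (lam : ℝ) {s : ℝ} (hs : 0 ≤ s) :
    ∃ y : ℝ, |y| = s ∧ lam * y = -(|lam| * s) := by
  rcases le_total 0 lam with h | h
  · exact ⟨-s, by simp [abs_of_nonneg hs], by rw [abs_of_nonneg h]; ring⟩
  · exact ⟨s, abs_of_nonneg hs, by rw [abs_of_nonpos h]; ring⟩

lemma norm_mean_le_of_norm_le_on_strip {g : ℂ → ℂ} (hg : Differentiable ℂ g) {T y A B : ℝ}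
    (hT : 0 < T) (hA : ∀ x : ℝ, ‖g (x + y * I)‖ ≤ A) (hB : ∀ z : ℂ, |z.im| ≤ |y| → ‖g z‖ ≤ B) :
    ‖(2 * T : ℂ)⁻¹ * ∫ x in (-T)..T, g x‖ ≤ A + B * |y| / T := by
  have h2T : ‖(2 * T : ℂ)⁻¹‖ = (2 * T)⁻¹ := by
    rw [norm_inv, norm_mul, norm_real, Real.norm_of_nonneg hT.le, Complex.norm_ofNat]
  rw [norm_mul, h2T]
  calc (2 * T)⁻¹ * ‖∫ x in (-T)..T, g x‖ ≤ (2 * T)⁻¹ * (A * (2 * T) + 2 * (B * |y|)) := by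
        gcongr; exact norm_integral_le_of_norm_le_on_strip hg hT.le hA hB
    _ = A + B * |y| / T := by field_simp

/-- one-variable Bohr theorem: the mean Fourier coefficient of a
bounded entire function of exponential type σ vanishes at frequencies |λ| > σ. -/
theorem bohr_one_variable (f : ℂ → ℂ) (C₀ σ : ℝ)
    (hf : Differentiable ℂ f)
    (hbound : ∀ z, ‖f z‖ ≤ C₀ * Real.exp (σ * ‖z‖))
    (hbdd : ∃ M : ℝ, ∀ t : ℝ, ‖f t‖ ≤ M)
    (lam : ℝ) (hlam : |lam| > σ) :
    Tendsto (fun T : ℝ => (2*T : ℂ)⁻¹ *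
        ∫ x in (-T)..T, f x * Complex.exp (-Complex.I * lam * x))
      atTop (nhds 0) := by
  obtain ⟨M, hM⟩ := hbdd
  set K := max M C₀
  have hK : 0 ≤ K := (norm_nonneg _).trans ((hM 0).trans (le_max_left _ _))
  have hg : Differentiable ℂ fun z => f z * exp (-I * lam * z) := hf.mul (by fun_prop)
  have norm_g := norm_mul_exp_neg_I_mul_le hf hbound hM lam
  have decay : Tendsto (fun s => K * Real.exp ((σ - |lam|) * s)) atTop (nhds 0) := by
    simpa using (Real.tendsto_exp_atBot.comp
      (tendsto_id.const_mul_atTop_of_neg (sub_neg.mpr hlam))).const_mul K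
  refine tendsto_zero_of_norm_le_add_div decay ((eventually_ge_atTop 0).mono fun s hs => ?_)
  obtain ⟨y, hy, hlam_y⟩ := exists_abs_eq_and_mul_eq_neg lam hs
  refine ⟨K * Real.exp ((|σ| + |lam|) * s) * |y|, fun T hT =>
    norm_mean_le_of_norm_le_on_strip hg hT (fun x => ?_) (fun z hz => ?_)⟩
  · convert norm_g (x + y * I) using 3
    simp only [add_im, ofReal_im, mul_im, ofReal_re, I_im, I_re, mul_one, mul_zero, add_zero,
      zero_add, hy]
    linarith
  · refine (norm_g z).trans ?_
    gcongr
    exact mul_abs_add_mul_le_abs_add_abs_mul σ lam (hz.trans hy.le)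
end
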